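/- arXiv:1012.1262 — 4 statements merged into one kernel-verified Lean document; each statement's English description precedes it below -/
import Mathlib

section
/- For n=3 and two sets of variables x=(x^(1),x^(2),x^(3)), y=(y^(1),y^(2),y^(3)), the rational map s defined by s(x^(i)) = y^(i+1) \kappa_{i+1}(x,y)/\kappa_i(x,y) and s(y^(i)) = x^(i-1) \kappa_{i-1}(x,y)/\kappa_i(x,y) fixes e_1^(1) = x^(1) + y^(1): that is, s(x^(1)) + s(y^(1)) = x^(1) + y^(1), assuming all \kappa_i(x,y) are nonzero. -/
theorem y2_mul_kappa2_add_x3_mul_kappa3 {R : Type*} [CommRing R] (x1 x2 x3 y1 y2 y3 : R) :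
    y2 * (x3 * x1 + y3 * x1 + y3 * y1) + x3 * (x1 * x2 + y1 * x2 + y1 * y2) =
      (x1 + y1) * (x2 * x3 + y2 * x3 + y2 * y3) := by
  ring

theorem s_fixes_e1_general {F : Type*} [Field F] (x1 x2 x3 y1 y2 y3 : F)
    (κ1 κ2 κ3 : F)
    (hκ1def : κ1 = x2 * x3 + y2 * x3 + y2 * y3)
    (hκ2def : κ2 = x3 * x1 + y3 * x1 + y3 * y1)
    (hκ3def : κ3 = x1 * x2 + y1 * x2 + y1 * y2)
    (h1 : κ1 ≠ 0) :
    y2 * (κ2 / κ1) + x3 * (κ3 / κ1) = x1 + y1 := by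
  subst hκ1def hκ2def hκ3def
  rw [← mul_div_assoc, ← mul_div_assoc, ← add_div, div_eq_iff h1]
  exact y2_mul_kappa2_add_x3_mul_kappa3 x1 x2 x3 y1 y2 y3

/-- For `n = 3`, the birational map `s` fixes `e_1^{(1)} = x^{(1)} + y^{(1)}`:
`s(x^{(1)}) + s(y^{(1)}) = x^{(1)} + y^{(1)}`, where
`s(x^{(1)}) = y^{(2)} κ₂/κ₁` and `s(y^{(1)}) = x^{(3)} κ₃/κ₁`. -/
theorem s_fixes_e1 {F : Type*} [Field F] (x1 x2 x3 y1 y2 y3 : F)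
    (κ1 κ2 κ3 : F)
    (hκ1def : κ1 = x2 * x3 + y2 * x3 + y2 * y3)
    (hκ2def : κ2 = x3 * x1 + y3 * x1 + y3 * y1)
    (hκ3def : κ3 = x1 * x2 + y1 * x2 + y1 * y2)
    (h1 : κ1 ≠ 0) (h2 : κ2 ≠ 0) (h3 : κ3 ≠ 0) :
    y2 * (κ2 / κ1) + x3 * (κ3 / κ1) = x1 + y1 :=
  s_fixes_e1_general x1 x2 x3 y1 y2 y3 κ1 κ2 κ3 hκ1def hκ2def hκ3def h1
end

section
/- For n=2, the map s on two pairs of variables given by s(x^(1)) = y^(2)(x^(1)+y^(1))/(x^(2)+y^(2)), s(x^(2)) = y^(1)(x^(2)+y^(2))/(x^(1)+y^(1)), s(y^(1)) = x^(2)(x^(1)+y^(1))/(x^(2)+y^(2)), s(y^(2)) = x^(1)(x^(2)+y^(2))/(x^(1)+y^(1)) is an involution: applying s twice returns the original variables (assuming x^(1)+y^(1) and x^(2)+y^(2) are nonzero, and remain nonzero after applying s). -/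
/-! Since `s` preserves `x¹ + y¹` and `x² + y²`, its second application divides by the same
denominators as the first, and each coordinate cancels back to its original value. -/

/-- The `n = 2` birational `R`-matrix map `s` on `(x¹, x², y¹, y²)`. -/
def sMap {F : Type*} [Field F] : F × F × F × F → F × F × F × F :=
  fun p =>
    let a := p.1; let b := p.2.1; let c := p.2.2.1; let d := p.2.2.2
    (d * (a + c) / (b + d), c * (b + d) / (a + c),
     b * (a + c) / (b + d), a * (b + d) / (a + c))

section

variable {F : Type*} [Field F] {a b c d : F}

theorem sMap_fst_add_snd_snd_fst (h : b + d ≠ 0) :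
    (sMap (a, b, c, d)).1 + (sMap (a, b, c, d)).2.2.1 = a + c := by
  simp only [sMap]
  field_simp
  ring

theorem sMap_snd_fst_add_snd_snd_snd (h : a + c ≠ 0) :
    (sMap (a, b, c, d)).2.1 + (sMap (a, b, c, d)).2.2.2 = b + d := by
  simp only [sMap]
  field_simp
  ring

end

/-- For `n = 2`, the map `s` is an involution (given the denominators are nonzero;
they are preserved by `s`). -/
theorem sMap_involution {F : Type*} [Field F] (a b c d : F)
    (h1 : a + c ≠ 0) (h2 : b + d ≠ 0) :
    sMap (sMap (a, b, c, d)) = (a, b, c, d) := by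
  have hac := sMap_fst_add_snd_snd_fst (a := a) (c := c) h2
  have hbd := sMap_snd_fst_add_snd_snd_snd (b := b) (d := d) h1
  simp only [sMap] at hac hbd ⊢
  rw [hac, hbd]
  ext <;> field_simp
end

section
/- For n=2, the map s defined by s(x^(1)) = y^(2)(x^(1)+y^(1))/(x^(2)+y^(2)), s(x^(2)) = y^(1)(x^(2)+y^(2))/(x^(1)+y^(1)), s(y^(1)) = x^(2)(x^(1)+y^(1))/(x^(2)+y^(2)), s(y^(2)) = x^(1)(x^(2)+y^(2))/(x^(1)+y^(1)) satisfies the matrix identity M(x^(1),x^(2)) M(y^(1),y^(2)) = M(s(x^(1)),s(x^(2))) M(s(y^(1)),s(y^(2))), where M(a,b) = [[1, a],[b t, 1]] over the polynomial ring in t. -/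
open Polynomial

/-- The 2×2 whirl matrix `M(a,b) = [[1, a],[b t, 1]]` over `F[t]`. -/
noncomputable def whirl2 {F : Type*} [Field F] (a b : F) :
    Matrix (Fin 2) (Fin 2) (Polynomial F) :=
  !![1, C a; C b * X, 1]

/-! The product `M(a,b) M(c,d)` depends only on `a + c`, `b + d`, `a d` and `b c`, and the map `s`
preserves these four quantities. -/

section

variable {F : Type*} [Field F]

theorem whirl2_mul (a b c d : F) :
    whirl2 a b * whirl2 c d =
      !![1 + C (a * d) * X, C (a + c); C (b + d) * X, C (b * c) * X + 1] := by
  rw [whirl2, whirl2, Matrix.mul_fin_two, EmbeddingLike.apply_eq_iff_eq]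
  simp only [map_add, map_mul, Matrix.vecCons_inj, and_true]
  refine ⟨⟨?_, ?_⟩, ?_, ?_⟩ <;> ring

theorem whirl2_mul_eq_whirl2_mul {a b c d a' b' c' d' : F}
    (hac : a + c = a' + c') (hbd : b + d = b' + d')
    (had : a * d = a' * d') (hbc : b * c = b' * c') :
    whirl2 a b * whirl2 c d = whirl2 a' b' * whirl2 c' d' := by
  rw [whirl2_mul, whirl2_mul, hac, hbd, had, hbc]

end

/-- The `n = 2` birational `R`-matrix `s` satisfies
`M(x¹,x²) M(y¹,y²) = M(s(x¹),s(x²)) M(s(y¹),s(y²))`. -/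
theorem whirl2_swap {F : Type*} [Field F] (a b c d : F)
    (h1 : a + c ≠ 0) (h2 : b + d ≠ 0) :
    whirl2 a b * whirl2 c d =
      whirl2 (d * (a + c) / (b + d)) (c * (b + d) / (a + c)) *
        whirl2 (b * (a + c) / (b + d)) (a * (b + d) / (a + c)) := by
  apply whirl2_mul_eq_whirl2_mul <;> field_simp <;> ring
end

section
/- In the Takahashi-Satsuma box-ball system, the total number of balls is conserved by time evolution: if a configuration is a finitely-supported function b: Z \to {0,1}, and T(b) is the configuration after one time step (defined by the carrier algorithm: the carrier moves left to right, picking up a ball from each occupied box and depositing one ball into each empty box whenever it carries at least one ball), then \sum_n T(b)(n) = \sum_n b(n). -/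
/-- The load of the box-ball carrier after it has processed boxes `0, …, n`
(starting empty to the left of box `0`): it picks up a ball from each occupied
box, and deposits a ball into each empty box while it carries at least one. -/
def carrier (b : ℕ → Bool) : ℕ → ℕ
  | 0 => if b 0 then 1 else 0
  | n + 1 => if b (n + 1) then carrier b n + 1 else carrier b n - 1

/-- One time step of the Takahashi–Satsuma box-ball system: box `n` is occupied
after the step exactly when it was empty and the carrier arrived there with a
positive load. -/
def boxBallStep (b : ℕ → Bool) : ℕ → Bool
  | 0 => false
  | n + 1 => !b (n + 1) && decide (0 < carrier b n)

/-! The carrier's load is the number of balls it has picked up minus the number it has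
deposited, so at any box where the carrier is empty the balls before and after the step
up to that box are equinumerous. -/

theorem boxBallStep_succ_add_carrier_succ (b : ℕ → Bool) (n : ℕ) :
    (if boxBallStep b (n + 1) then 1 else 0) + carrier b (n + 1) =
      carrier b n + if b (n + 1) then 1 else 0 := by
  simp only [boxBallStep, carrier]
  by_cases hb : b (n + 1) <;> by_cases h : 0 < carrier b n <;> simp [hb, h] <;> omega

theorem sum_boxBallStep_add_carrier (b : ℕ → Bool) (M : ℕ) :
    (∑ n ∈ Finset.range (M + 1), if boxBallStep b n then 1 else 0) + carrier b M =
      ∑ n ∈ Finset.range (M + 1), if b n then 1 else 0 := by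
  induction M with
  | zero =>
    rw [zero_add, Finset.sum_range_one, Finset.sum_range_one]
    by_cases hb : b 0 <;> simp [boxBallStep, carrier, hb]
  | succ M ih =>
    rw [Finset.sum_range_succ, Finset.sum_range_succ (fun n => if b n then 1 else 0),
      add_assoc, boxBallStep_succ_add_carrier_succ, ← add_assoc, ih]

theorem boxBall_ball_number_conserved_general (b : ℕ → Bool) (K : ℕ)
    (hempty : carrier b K = 0) :
    (∑ n ∈ Finset.range (K + 1), if boxBallStep b n then 1 else 0) =
      ∑ n ∈ Finset.range (K + 1), if b n then 1 else 0 := by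
  simpa [hempty] using sum_boxBallStep_add_carrier b K

/-- Conservation of the total number of balls under box-ball time evolution:
if the configuration is supported on `{0, …, N}` and by box `K ≥ N` the carrier
has emptied, then the numbers of balls before and after the step agree. -/
theorem boxBall_ball_number_conserved (b : ℕ → Bool) (N K : ℕ)
    (hsupp : ∀ n, N < n → b n = false) (hNK : N ≤ K) (hempty : carrier b K = 0) :
    (∑ n ∈ Finset.range (K + 1), if boxBallStep b n then 1 else 0) =
      ∑ n ∈ Finset.range (K + 1), if b n then 1 else 0 :=
  boxBall_ball_number_conserved_general b K hempty
end
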